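/- Let s > 0 and take characteristic numbers (a₁, a₂, a₃) = (4s, 3s, 3s). Then for every X ∈ m one has (1/2)[X, f₄X]_m + U(X, f₄X) − f₄(U(X, X)) = 0, where U is built from these characteristic numbers; that is, (f₄, g_{(4s,3s,3s)}) satisfies the Killing f-structure condition. -/

import Mathlib

/-!
Write `X = (a, b, c) ∈ m₁ ⊕ m₂ ⊕ m₃` and `J(x₁, x₂) = (x₂, -x₁)`, so that `f₄X = (0, Jb, -Jc)`.
Since `a₂ = a₃`, the `[m₂, m₃]`-term of `U` drops out and the other two coefficients both equal
`-1/6`. All three terms are then multiples of `V = (0, a Jc, a Jb)`: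
`[X, f₄X]_m = -V`, `U(X, f₄X) = V/6` and `f₄(U(X, X)) = -V/3`, and `-1/2 + 1/6 + 1/3 = 0`.
-/

namespace SO4

/-- The matrix `E_{pq}` with `1` in position `(p,q)` and `0` elsewhere (indices `0,…,3`
correspond to the paper's `1,…,4`). -/
def E (p q : Fin 4) : Matrix (Fin 4) (Fin 4) ℝ := Matrix.single p q 1

/-- The element of `m` with coordinates `(a, b₁, b₂, c₁, c₂)`. -/
noncomputable def M (a b1 b2 c1 c2 : ℝ) : Matrix (Fin 4) (Fin 4) ℝ :=
  a • (E 0 1 - E 1 0) + b1 • (E 0 2 - E 2 0) + b2 • (E 0 3 - E 3 0) +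
    c1 • (E 1 2 - E 2 1) + c2 • (E 1 3 - E 3 1)

/-- `h = span{E₃₄ − E₄₃}`, the embedded `so(2)`. -/
def hsub : Submodule ℝ (Matrix (Fin 4) (Fin 4) ℝ) := Submodule.span ℝ {E 2 3 - E 3 2}

/-- `m₁ = span{E₁₂ − E₂₁}`. -/
def m1 : Submodule ℝ (Matrix (Fin 4) (Fin 4) ℝ) := Submodule.span ℝ {E 0 1 - E 1 0}

/-- `m₂ = span{E₁₃ − E₃₁, E₁₄ − E₄₁}`. -/
def m2 : Submodule ℝ (Matrix (Fin 4) (Fin 4) ℝ) :=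
  Submodule.span ℝ {E 0 2 - E 2 0, E 0 3 - E 3 0}

/-- `m₃ = span{E₂₃ − E₃₂, E₂₄ − E₄₂}`. -/
def m3 : Submodule ℝ (Matrix (Fin 4) (Fin 4) ℝ) :=
  Submodule.span ℝ {E 1 2 - E 2 1, E 1 3 - E 3 1}

/-- `m = m₁ ⊕ m₂ ⊕ m₃`. -/
def msum : Submodule ℝ (Matrix (Fin 4) (Fin 4) ℝ) := m1 ⊔ m2 ⊔ m3

/-- The projection of `X ∈ so(4)` onto `m` along `h` (read off the coordinates
`a = X₁₂, b₁ = X₁₃, b₂ = X₁₄, c₁ = X₂₃, c₂ = X₂₄`). -/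
noncomputable def projm (X : Matrix (Fin 4) (Fin 4) ℝ) : Matrix (Fin 4) (Fin 4) ℝ :=
  M (X 0 1) (X 0 2) (X 0 3) (X 1 2) (X 1 3)

/-- The `m₁`-component of `X ∈ m`. -/
noncomputable def P1 (X : Matrix (Fin 4) (Fin 4) ℝ) : Matrix (Fin 4) (Fin 4) ℝ :=
  M (X 0 1) 0 0 0 0

/-- The `m₂`-component of `X ∈ m`. -/
noncomputable def P2 (X : Matrix (Fin 4) (Fin 4) ℝ) : Matrix (Fin 4) (Fin 4) ℝ :=
  M 0 (X 0 2) (X 0 3) 0 0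

/-- The `m₃`-component of `X ∈ m`. -/
noncomputable def P3 (X : Matrix (Fin 4) (Fin 4) ℝ) : Matrix (Fin 4) (Fin 4) ℝ :=
  M 0 0 0 (X 1 2) (X 1 3)

/-- `f₁(a,b₁,b₂,c₁,c₂) = (0, b₂, −b₁, 0, 0)`, acting on `m`. -/
noncomputable def f1 (X : Matrix (Fin 4) (Fin 4) ℝ) : Matrix (Fin 4) (Fin 4) ℝ :=
  M 0 (X 0 3) (-(X 0 2)) 0 0

/-- `f₂(a,b₁,b₂,c₁,c₂) = (0, 0, 0, c₂, −c₁)`, acting on `m`. -/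
noncomputable def f2 (X : Matrix (Fin 4) (Fin 4) ℝ) : Matrix (Fin 4) (Fin 4) ℝ :=
  M 0 0 0 (X 1 3) (-(X 1 2))

/-- `f₃(a,b₁,b₂,c₁,c₂) = (0, b₂, −b₁, c₂, −c₁)`, acting on `m`. -/
noncomputable def f3 (X : Matrix (Fin 4) (Fin 4) ℝ) : Matrix (Fin 4) (Fin 4) ℝ :=
  M 0 (X 0 3) (-(X 0 2)) (X 1 3) (-(X 1 2))

/-- `f₄(a,b₁,b₂,c₁,c₂) = (0, b₂, −b₁, −c₂, c₁)`, acting on `m`. -/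
noncomputable def f4 (X : Matrix (Fin 4) (Fin 4) ℝ) : Matrix (Fin 4) (Fin 4) ℝ :=
  M 0 (X 0 3) (-(X 0 2)) (-(X 1 3)) (X 1 2)

end SO4

namespace SO4

/-- The symmetric bilinear map `U` built from the characteristic numbers `(a₁,a₂,a₃)`:
`U(X,Y) = ((a₃−a₂)/(2a₁))([X₂,Y₃]+[Y₂,X₃]) + ((a₃−a₁)/(2a₂))([X₁,Y₃]+[Y₁,X₃])
        + ((a₂−a₁)/(2a₃))([X₁,Y₂]+[Y₁,X₂])`. -/
noncomputable def U (a1 a2 a3 : ℝ) (X Y : Matrix (Fin 4) (Fin 4) ℝ) :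
    Matrix (Fin 4) (Fin 4) ℝ :=
  ((a3 - a2) / (2 * a1)) • (⁅P2 X, P3 Y⁆ + ⁅P2 Y, P3 X⁆) +
    ((a3 - a1) / (2 * a2)) • (⁅P1 X, P3 Y⁆ + ⁅P1 Y, P3 X⁆) +
    ((a2 - a1) / (2 * a3)) • (⁅P1 X, P2 Y⁆ + ⁅P1 Y, P2 X⁆)

end SO4

namespace SO4

section Coordinates

variable (a b₁ b₂ c₁ c₂ a' b₁' b₂' c₁' c₂' : ℝ)

lemma M_eq_matrix : M a b₁ b₂ c₁ c₂ =
    !![0, a, b₁, b₂; -a, 0, c₁, c₂; -b₁, -c₁, 0, 0; -b₂, -c₂, 0, 0] := by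
  ext i j
  fin_cases i <;> fin_cases j <;> simp [M, E]

@[simp] lemma M_apply_zero_one : M a b₁ b₂ c₁ c₂ 0 1 = a := by simp [M_eq_matrix]
@[simp] lemma M_apply_zero_two : M a b₁ b₂ c₁ c₂ 0 2 = b₁ := by simp [M_eq_matrix]
@[simp] lemma M_apply_zero_three : M a b₁ b₂ c₁ c₂ 0 3 = b₂ := by simp [M_eq_matrix]
@[simp] lemma M_apply_one_two : M a b₁ b₂ c₁ c₂ 1 2 = c₁ := by simp [M_eq_matrix]
@[simp] lemma M_apply_one_three : M a b₁ b₂ c₁ c₂ 1 3 = c₂ := by simp [M_eq_matrix]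

lemma P1_M : P1 (M a b₁ b₂ c₁ c₂) = M a 0 0 0 0 := by simp [P1]
lemma P2_M : P2 (M a b₁ b₂ c₁ c₂) = M 0 b₁ b₂ 0 0 := by simp [P2]
lemma P3_M : P3 (M a b₁ b₂ c₁ c₂) = M 0 0 0 c₁ c₂ := by simp [P3]
lemma f4_M : f4 (M a b₁ b₂ c₁ c₂) = M 0 b₂ (-b₁) (-c₂) c₁ := by simp [f4]

lemma lie_M : ⁅M a b₁ b₂ c₁ c₂, M a' b₁' b₂' c₁' c₂'⁆ =
    M (b₁' * c₁ + b₂' * c₂ - b₁ * c₁' - b₂ * c₂') (a * c₁' - a' * c₁) (a * c₂' - a' * c₂)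
      (a' * b₁ - a * b₁') (a' * b₂ - a * b₂') +
    (b₁' * b₂ + c₁' * c₂ - b₁ * b₂' - c₁ * c₂') • (E 2 3 - E 3 2) := by
  rw [Ring.lie_def, M_eq_matrix, M_eq_matrix, M_eq_matrix]
  ext i j
  fin_cases i <;> fin_cases j <;> simp [E] <;> ring

lemma projm_lie_M : projm ⁅M a b₁ b₂ c₁ c₂, M a' b₁' b₂' c₁' c₂'⁆ =
    M (b₁' * c₁ + b₂' * c₂ - b₁ * c₁' - b₂ * c₂') (a * c₁' - a' * c₁) (a * c₂' - a' * c₂)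
      (a' * b₁ - a * b₁') (a' * b₂ - a * b₂') := by
  simp [projm, lie_M, E]

end Coordinates

lemma exists_eq_M_of_mem_msum {X : Matrix (Fin 4) (Fin 4) ℝ} (hX : X ∈ msum) :
    ∃ a b₁ b₂ c₁ c₂, X = M a b₁ b₂ c₁ c₂ := by
  obtain ⟨y, hy, z, hz, rfl⟩ := Submodule.mem_sup.1 hX
  obtain ⟨u, hu, v, hv, rfl⟩ := Submodule.mem_sup.1 hy
  obtain ⟨a, rfl⟩ := Submodule.mem_span_singleton.1 hu
  obtain ⟨b₁, b₂, rfl⟩ := Submodule.mem_span_pair.1 hv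
  obtain ⟨c₁, c₂, rfl⟩ := Submodule.mem_span_pair.1 hz
  exact ⟨a, b₁, b₂, c₁, c₂, by simp only [M]; abel⟩

lemma U_M (a₁ a₂ a₃ a b₁ b₂ c₁ c₂ a' b₁' b₂' c₁' c₂' : ℝ) :
    U a₁ a₂ a₃ (M a b₁ b₂ c₁ c₂) (M a' b₁' b₂' c₁' c₂') =
      M (-((a₃ - a₂) / (2 * a₁) * (b₁ * c₁' + b₂ * c₂' + b₁' * c₁ + b₂' * c₂)))
        ((a₃ - a₁) / (2 * a₂) * (a * c₁' + a' * c₁))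
        ((a₃ - a₁) / (2 * a₂) * (a * c₂' + a' * c₂))
        (-((a₂ - a₁) / (2 * a₃) * (a * b₁' + a' * b₁)))
        (-((a₂ - a₁) / (2 * a₃) * (a * b₂' + a' * b₂))) := by
  simp only [U, P1_M, P2_M, P3_M, lie_M]
  simp only [M]
  module

end SO4

open SO4 in
/-- for `s > 0` and characteristic numbers `(a₁,a₂,a₃) = (4s,3s,3s)`, every
`X ∈ m` satisfies `(1/2)[X, f₄X]_m + U(X, f₄X) − f₄(U(X, X)) = 0`; that is,
`(f₄, g_{(4s,3s,3s)})` satisfies the Killing `f`-structure condition. -/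
theorem statement13 :
    ∀ s : ℝ, 0 < s → ∀ X ∈ msum,
      (1 / 2 : ℝ) • projm ⁅X, f4 X⁆ + U (4 * s) (3 * s) (3 * s) X (f4 X)
        - f4 (U (4 * s) (3 * s) (3 * s) X X) = 0 := by
  intro s hs X hX
  obtain ⟨a, b₁, b₂, c₁, c₂, rfl⟩ := exists_eq_M_of_mem_msum hX
  have h₁ : (3 * s - 3 * s) / (2 * (4 * s)) = 0 := by simp
  have h₂ : (3 * s - 4 * s) / (2 * (3 * s)) = -1 / 6 := by
    field_simp [hs.ne']
    ring
  rw [f4_M, projm_lie_M, U_M, U_M, f4_M, h₁, h₂]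
  simp only [M]
  module
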